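/- arXiv:1711.00516 — 3 statements merged into one kernel-verified Lean document; each statement's English description precedes it below -/
import Mathlib

section
/- Let a > 0, τ ≥ 0, λ ∈ ℝ and M ∈ ℕ. Let u_0, u_1, …, u_M and v_1, …, v_M be elements of 𝓢(ℝ;ℂ), and let g_0, …, g_{M−1} and θ_0, …, θ_{M−1} : ℝ → ℝ be measurable with g_m(x) ≤ −a for all m and all x. Suppose that for each m < M, writing w_m := (u_m + v_{m+1})/2: (i) v_{m+1}(x) = u_m(x) + iτ·w_m''(x) + iλτ·((|u_m(x)|² + |v_{m+1}(x)|²)/2)·w_m(x) for all x, and (ii) u_{m+1}(x) = exp(τ·g_m(x) + i·θ_m(x))·v_{m+1}(x) for all x. Then for every m ≤ M, ∫_ℝ |u_m(x)|² dx ≤ e^{−2amτ} ∫_ℝ |u_0(x)|² dx. -/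
/-!
The Crank–Nicolson step conserves the charge: with `w = (u + v) / 2`, the step gives pointwise
`|v|² - |u|² = -2τ Im(conj w · w'')`, the nonlinear term being a real multiple of `i w`, and after
integration by parts `∫ conj w · w'' = -∫ |w'|²` is real. The multiplication step has modulus
`exp(τ g) ≤ exp(-aτ)`, so each full step contracts the charge by `exp(-2aτ)`.
-/

open MeasureTheory Complex ComplexConjugate SchwartzMap

lemma norm_sq_sub_norm_sq_of_eq_add_I_mul (τ c : ℝ) {p q : ℂ} (D : ℂ)
    (h : q = p + I * τ * D + I * c * ((p + q) / 2)) :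
    ‖q‖ ^ 2 - ‖p‖ ^ 2 = -2 * τ * (conj ((p + q) / 2) * D).im := by
  have hre := congrArg re h
  have him := congrArg im h
  simp only [add_re, add_im, mul_re, mul_im, I_re, I_im, ofReal_re, ofReal_im, div_ofNat_re,
    div_ofNat_im] at hre him
  simp only [Complex.sq_norm, normSq_apply, mul_im, conj_re, conj_im, div_ofNat_re, div_ofNat_im,
    add_re, add_im]
  linear_combination (q.re + p.re) * hre + (q.im + p.im) * him

lemma norm_exp_ofReal_mul_add_I_mul_sq_le {a τ g : ℝ} (hτ : 0 ≤ τ) (hg : g ≤ -a) (θ : ℝ)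
    (z : ℂ) : ‖exp (↑(τ * g) + I * ↑θ) * z‖ ^ 2 ≤ Real.exp (-2 * a * τ) * ‖z‖ ^ 2 := by
  have hre : (↑(τ * g) + I * ↑θ : ℂ).re = τ * g := by simp
  rw [norm_mul, norm_exp, hre, mul_pow, ← Real.exp_nat_mul]
  gcongr ?_ * _
  exact Real.exp_le_exp.mpr (by push_cast; nlinarith)

namespace SchwartzMap

lemma integrable_norm_sq (f : 𝓢(ℝ, ℂ)) : Integrable fun x ↦ ‖f x‖ ^ 2 :=
  (f.memLp 2).integrable_norm_pow two_ne_zero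

theorem integral_im_conj_mul_deriv_deriv (f : 𝓢(ℝ, ℂ)) :
    ∫ x, (conj (f x) * deriv (deriv f) x).im = 0 := by
  have hparts := integral_bilinear_deriv_right_eq_neg_left f (derivCLM ℝ ℂ f)
    ((ContinuousLinearMap.compL ℝ ℂ ℂ ℝ imCLM).comp
      ((ContinuousLinearMap.mul ℝ ℂ).comp conjCLE.toContinuousLinearMap))
  rw [funext (derivCLM_apply ℝ f)] at hparts
  simpa [mul_comm (conj _), mul_conj] using hparts

end SchwartzMap

theorem integral_norm_sq_eq_of_crank_nicolson_step (τ lam : ℝ) {U V : 𝓢(ℝ, ℂ)}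
    (hstep : ∀ x : ℝ,
      V x = U x + I * (τ : ℂ) * deriv (deriv (fun y : ℝ => (U y + V y) / 2)) x
        + I * (lam : ℂ) * (τ : ℂ) * (((‖U x‖ ^ 2 + ‖V x‖ ^ 2 : ℝ) : ℂ) / 2) * ((U x + V x) / 2)) :
    ∫ x, ‖V x‖ ^ 2 = ∫ x, ‖U x‖ ^ 2 := by
  set W : 𝓢(ℝ, ℂ) := (2 : ℂ)⁻¹ • (U + V)
  have hW : (fun y : ℝ => (U y + V y) / 2) = W := by
    ext y
    simp only [W, smul_apply, add_apply, smul_eq_mul]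
    ring
  have hpt (x : ℝ) : ‖V x‖ ^ 2 - ‖U x‖ ^ 2 = -2 * τ * (conj (W x) * deriv (deriv W) x).im := by
    rw [← congrFun hW x]
    refine norm_sq_sub_norm_sq_of_eq_add_I_mul τ (lam * τ * ((‖U x‖ ^ 2 + ‖V x‖ ^ 2) / 2)) _ ?_
    rw [← hW]
    conv_lhs => rw [hstep x]
    push_cast
    ring
  rw [← sub_eq_zero, ← integral_sub V.integrable_norm_sq U.integrable_norm_sq]
  simp_rw [hpt]
  rw [integral_const_mul, W.integral_im_conj_mul_deriv_deriv, mul_zero]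

theorem integral_norm_sq_le_of_eq_exp_mul {a τ : ℝ} (hτ : 0 ≤ τ) {g θ : ℝ → ℝ}
    (hg : ∀ x, g x ≤ -a) {U V : 𝓢(ℝ, ℂ)}
    (hmult : ∀ x, U x = exp ((τ * g x : ℝ) + I * (θ x : ℝ)) * V x) :
    ∫ x, ‖U x‖ ^ 2 ≤ Real.exp (-2 * a * τ) * ∫ x, ‖V x‖ ^ 2 := by
  rw [← integral_const_mul]
  refine integral_mono U.integrable_norm_sq (V.integrable_norm_sq.const_mul _) fun x ↦ ?_
  rw [hmult x]
  exact norm_exp_ofReal_mul_add_I_mul_sq_le hτ (hg x) _ _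

theorem stmt2_general (a τ lam : ℝ) (hτ : 0 ≤ τ) (M : ℕ)
    (u : ℕ → SchwartzMap ℝ ℂ) (v : ℕ → SchwartzMap ℝ ℂ)
    (g θ : ℕ → ℝ → ℝ)
    (hga : ∀ m, ∀ x : ℝ, g m x ≤ -a)
    (hstep : ∀ m < M, ∀ x : ℝ,
      v (m + 1) x = u m x + Complex.I * (τ : ℂ) *
          deriv (deriv (fun y : ℝ => (u m y + v (m + 1) y) / 2)) x
        + Complex.I * (lam : ℂ) * (τ : ℂ) *
          (((‖u m x‖ ^ 2 + ‖v (m + 1) x‖ ^ 2 : ℝ) : ℂ) / 2) *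
          ((u m x + v (m + 1) x) / 2))
    (hmult : ∀ m < M, ∀ x : ℝ,
      u (m + 1) x = Complex.exp ((τ * g m x : ℝ) + Complex.I * (θ m x : ℝ)) * v (m + 1) x) :
    ∀ m ≤ M, ∫ x : ℝ, ‖u m x‖ ^ 2 ≤
      Real.exp (-2 * a * m * τ) * ∫ x : ℝ, ‖u 0 x‖ ^ 2 := by
  intro m hm
  have hdecay : ∀ n < m, ∫ x, ‖u (n + 1) x‖ ^ 2 ≤ Real.exp (-2 * a * τ) * ∫ x, ‖u n x‖ ^ 2 :=
    fun n hn ↦ by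
      rw [← integral_norm_sq_eq_of_crank_nicolson_step τ lam (hstep n (by omega))]
      exact integral_norm_sq_le_of_eq_exp_mul hτ (hga n) (hmult n (by omega))
  calc ∫ x, ‖u m x‖ ^ 2
      ≤ Real.exp (-2 * a * τ) ^ m * ∫ x, ‖u 0 x‖ ^ 2 :=
        le_geom (u := fun n ↦ ∫ x, ‖u n x‖ ^ 2) (Real.exp_nonneg _) m hdecay
    _ = Real.exp (-2 * a * m * τ) * ∫ x, ‖u 0 x‖ ^ 2 := by
        rw [← Real.exp_nat_mul]
        ring_nf

/-- Pathwise exponential charge decay for the splitting Crank–Nicolson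
scheme: one deterministic Crank–Nicolson step followed by the multiplication step
`u_{m+1} = exp(τ g_m + i θ_m) v_{m+1}` with `g_m ≤ -a` yields
`∫|u_m|² ≤ e^{-2amτ} ∫|u_0|²` for all `m ≤ M`. -/
theorem stmt2 (a τ lam : ℝ) (ha : 0 < a) (hτ : 0 ≤ τ) (M : ℕ)
    (u : ℕ → SchwartzMap ℝ ℂ) (v : ℕ → SchwartzMap ℝ ℂ)
    (g θ : ℕ → ℝ → ℝ)
    (hg : ∀ m, Measurable (g m)) (hθ : ∀ m, Measurable (θ m))
    (hga : ∀ m, ∀ x : ℝ, g m x ≤ -a)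
    (hstep : ∀ m < M, ∀ x : ℝ,
      v (m + 1) x = u m x + Complex.I * (τ : ℂ) *
          deriv (deriv (fun y : ℝ => (u m y + v (m + 1) y) / 2)) x
        + Complex.I * (lam : ℂ) * (τ : ℂ) *
          (((‖u m x‖ ^ 2 + ‖v (m + 1) x‖ ^ 2 : ℝ) : ℂ) / 2) *
          ((u m x + v (m + 1) x) / 2))
    (hmult : ∀ m < M, ∀ x : ℝ,
      u (m + 1) x = Complex.exp ((τ * g m x : ℝ) + Complex.I * (θ m x : ℝ)) * v (m + 1) x) :
    ∀ m ≤ M, ∫ x : ℝ, ‖u m x‖ ^ 2 ≤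
      Real.exp (-2 * a * m * τ) * ∫ x : ℝ, ‖u 0 x‖ ^ 2 :=
  stmt2_general a τ lam hτ M u v g θ hga hstep hmult
end

section
/- Let λ ∈ ℝ and let u : ℝ → 𝓢(ℝ;ℂ) be a curve of Schwartz functions. Suppose that for every t ∈ ℝ, the map t ↦ u(t), regarded as a curve in L²(ℝ;ℂ), is differentiable at t with derivative equal to (the L² class of) the Schwartz function i·u(t)'' + iλ·|u(t)|²·u(t). Then the charge t ↦ ∫_ℝ |u(t)(x)|² dx is constant on ℝ. -/
open MeasureTheory Complex Filter

/-!
The charge is the squared `L²` norm, whose derivative along the flow is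
`2 Re ⟪u, i u'' + iλ|u|²u⟫`. Integrating by parts, `⟪u, u''⟫ = -‖u'‖²`, and `⟪u, |u|²u⟫ = ‖u‖₄⁴`;
both are real, so the inner product is purely imaginary and the derivative vanishes.
-/

open scoped SchwartzMap ComplexConjugate

theorem norm_sq_eq_of_re_inner_deriv_eq_zero {𝕜 E : Type*} [RCLike 𝕜] [NormedAddCommGroup E]
    [InnerProductSpace 𝕜 E] [NormedSpace ℝ E] {U U' : ℝ → E}
    (hU : ∀ t, HasDerivAt U (U' t) t) (horth : ∀ t, RCLike.re (inner 𝕜 (U t) (U' t)) = 0)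
    (s t : ℝ) : ‖U s‖ ^ 2 = ‖U t‖ ^ 2 := by
  have hderiv : ∀ t, HasDerivAt (fun τ => inner 𝕜 (U τ) (U τ)) 0 t := fun t => by
    convert (hU t).inner 𝕜 (hU t) using 1
    rw [← inner_conj_symm (U' t) (U t), RCLike.add_conj, horth]
    simp
  rw [← inner_self_eq_norm_sq (𝕜 := 𝕜), ← inner_self_eq_norm_sq (𝕜 := 𝕜),
    is_const_of_deriv_eq_zero (fun t => (hderiv t).differentiableAt) (fun t => (hderiv t).deriv) s t]

namespace MeasureTheory.L2

variable {α 𝕜 : Type*} [RCLike 𝕜] [MeasurableSpace α] {μ : Measure α}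

theorem inner_eq_integral_conj_mul_of_ae_eq {F G : α →₂[μ] 𝕜} {f g : α → 𝕜}
    (hF : F =ᵐ[μ] f) (hG : G =ᵐ[μ] g) : inner 𝕜 F G = ∫ x, conj (f x) * g x ∂μ := by
  rw [inner_def]
  refine integral_congr_ae ?_
  filter_upwards [hF, hG] with x hFx hGx
  rw [RCLike.inner_apply, hFx, hGx, mul_comm]

theorem norm_sq_eq_integral_norm_sq_of_ae_eq {F : α →₂[μ] 𝕜} {f : α → 𝕜} (hF : F =ᵐ[μ] f) :
    ‖F‖ ^ 2 = ∫ x, ‖f x‖ ^ 2 ∂μ := by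
  rw [← inner_self_eq_norm_sq (𝕜 := 𝕜), inner_eq_integral_conj_mul_of_ae_eq hF hF]
  simp_rw [RCLike.conj_mul, ← RCLike.ofReal_pow, integral_ofReal, RCLike.ofReal_re]

end MeasureTheory.L2

namespace SchwartzMap

theorem integrable_conj_mul {D : Type*} [NormedAddCommGroup D] [NormedSpace ℝ D]
    [MeasurableSpace D] [BorelSpace D] [SecondCountableTopology D] {μ : Measure D}
    [μ.HasTemperateGrowth] (f g : 𝓢(D, ℂ)) :
    Integrable (fun x => conj (f x) * g x) μ :=
  (pairing ((ContinuousLinearMap.mul ℝ ℂ).comp conjCLE.toContinuousLinearMap) f g).integrable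

theorem integral_conj_mul_deriv_eq_neg (f g : 𝓢(ℝ, ℂ)) :
    ∫ x, conj (f x) * deriv g x = -∫ x, conj (deriv f x) * g x :=
  integral_bilinear_deriv_right_eq_neg_left f g
    ((ContinuousLinearMap.mul ℝ ℂ).comp conjCLE.toContinuousLinearMap)

theorem integral_conj_mul_deriv_deriv (f : 𝓢(ℝ, ℂ)) :
    ∫ x, conj (f x) * deriv (deriv f) x = -((∫ x, ‖deriv f x‖ ^ 2 : ℝ) : ℂ) := by
  have hibp : ∫ x, conj (f x) * deriv (deriv f) x = -∫ x, conj (deriv f x) * deriv f x :=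
    integral_conj_mul_deriv_eq_neg f (derivCLM ℝ ℂ f)
  rw [hibp, ← integral_complex_ofReal]
  simp_rw [RCLike.conj_mul]
  norm_cast

theorem integral_conj_mul_nls (lam : ℝ) (f : 𝓢(ℝ, ℂ)) :
    ∫ x, conj (f x) * (I * deriv (deriv f) x + I * (lam : ℂ) * ((‖f x‖ ^ 2 : ℝ) : ℂ) * f x)
      = I * ((lam * (∫ x, ‖f x‖ ^ 4) - ∫ x, ‖deriv f x‖ ^ 2 : ℝ) : ℂ) := by
  have hlin : Integrable (fun x => conj (f x) * deriv (deriv f) x) :=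
    integrable_conj_mul f (derivCLM ℝ ℂ (derivCLM ℝ ℂ f))
  have hquartic : Integrable (fun x => I * ((lam * ‖f x‖ ^ 4 : ℝ) : ℂ)) :=
    (((f.memLp 4).integrable_norm_pow (by norm_num)).const_mul lam).ofReal.const_mul I
  have hsplit : ∀ x,
      conj (f x) * (I * deriv (deriv f) x + I * (lam : ℂ) * ((‖f x‖ ^ 2 : ℝ) : ℂ) * f x)
        = I * (conj (f x) * deriv (deriv f) x) + I * ((lam * ‖f x‖ ^ 4 : ℝ) : ℂ) := fun x => by
    push_cast
    linear_combination I * (lam : ℂ) * ((‖f x‖ : ℂ) ^ 2) * RCLike.conj_mul (f x)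
  simp_rw [hsplit]
  rw [integral_add (hlin.const_mul I) hquartic, integral_const_mul, integral_const_mul,
    integral_conj_mul_deriv_deriv, integral_complex_ofReal, integral_const_mul]
  push_cast
  ring

end SchwartzMap

/-- Charge conservation for the deterministic NLS flow: if the curve
`t ↦ u(t)`, regarded as a curve in `L²(ℝ;ℂ)` (via an `L²` representative `U`), is
differentiable at every `t` with derivative the `L²` class of
`i u(t)'' + iλ|u(t)|²u(t)`, then `t ↦ ∫|u(t)|²` is constant. -/
theorem stmt3 (lam : ℝ) (u : ℝ → SchwartzMap ℝ ℂ)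
    (U : ℝ → Lp ℂ 2 (volume : Measure ℝ))
    (hU : ∀ t, (U t : ℝ → ℂ) =ᵐ[volume] u t)
    (hderiv : ∀ t : ℝ, ∃ d : Lp ℂ 2 (volume : Measure ℝ),
      HasDerivAt U d t ∧
        (d : ℝ → ℂ) =ᵐ[volume] fun x : ℝ =>
          Complex.I * deriv (deriv (u t)) x
            + Complex.I * (lam : ℂ) * ((‖u t x‖ ^ 2 : ℝ) : ℂ) * u t x) :
    ∀ s t : ℝ, ∫ x : ℝ, ‖u t x‖ ^ 2 = ∫ x : ℝ, ‖u s x‖ ^ 2 := by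
  choose d hd hd_eq using hderiv
  have horth : ∀ t, RCLike.re (inner ℂ (U t) (d t)) = 0 := fun t => by
    rw [L2.inner_eq_integral_conj_mul_of_ae_eq (hU t) (hd_eq t),
      SchwartzMap.integral_conj_mul_nls]
    simp
  intro s t
  rw [← L2.norm_sq_eq_integral_norm_sq_of_ae_eq (hU t),
    ← L2.norm_sq_eq_integral_norm_sq_of_ae_eq (hU s)]
  exact norm_sq_eq_of_re_inner_deriv_eq_zero hd horth t s
end

section
/- Let λ ∈ ℝ, a > 0, and let α : ℝ → ℝ be a smooth function all of whose derivatives have at most polynomial growth, with α(x) ≥ a for all x ∈ ℝ. Let u : [0,∞) → 𝓢(ℝ;ℂ) be a curve of Schwartz functions such that for every t ≥ 0 the map t ↦ u(t), regarded as a curve in L²(ℝ;ℂ), is differentiable at t with derivative equal to (the L² class of) the Schwartz function i·u(t)'' + iλ·|u(t)|²·u(t) − α·u(t). Then for all t ≥ 0: (∫_ℝ|u(t)(x)|²dx)^{1/2} ≤ e^{−at}·(∫_ℝ|u(0)(x)|²dx)^{1/2}. -/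
/-!
Along the flow, `d/dt ‖u‖²_{L²} = 2 Re ⟪u̇, u⟫`. Integrating by parts, `∫ conj(u'') u = -∫ |u'|²`
is real, so the dispersive term `i u''` contributes nothing to the real part; the nonlinear term
`iλ|u|²u` is pointwise orthogonal to `u`; only the damping survives, giving
`d/dt ‖u‖² ≤ -2a ‖u‖²`. Grönwall (monotonicity of `e^{2at} ‖u(t)‖²`) then yields the decay.
-/

open MeasureTheory Complex

open scoped ComplexConjugate InnerProductSpace SchwartzMap

theorem HasDerivAt.norm_sq_rclike {𝕜 E : Type*} [RCLike 𝕜] [NormedAddCommGroup E]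
    [InnerProductSpace 𝕜 E] [NormedSpace ℝ E] [IsScalarTower ℝ 𝕜 E]
    {f : ℝ → E} {f' : E} {t : ℝ} (hf : HasDerivAt f f' t) :
    HasDerivAt (‖f ·‖ ^ 2) (2 * RCLike.re ⟪f', f t⟫_𝕜) t := by
  have h := RCLike.reCLM.hasFDerivAt.comp_hasDerivAt t (hf.inner 𝕜 hf)
  rw [RCLike.reCLM_apply, map_add, ← inner_conj_symm (f t) f', RCLike.conj_re, ← two_mul] at h
  have hfun : (‖f ·‖ ^ 2) = RCLike.reCLM ∘ fun r => ⟪f r, f r⟫_𝕜 :=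
    funext fun r => (inner_self_eq_norm_sq (𝕜 := 𝕜) (f r)).symm
  rwa [hfun]

theorem le_exp_mul_of_hasDerivAt_le {g : ℝ → ℝ} {b : ℝ}
    (hg : ∀ t, 0 ≤ t → ∃ g', HasDerivAt g g' t ∧ g' ≤ -b * g t)
    {t : ℝ} (ht : 0 ≤ t) : g t ≤ Real.exp (-b * t) * g 0 := by
  have hweighted : ∀ s, 0 ≤ s →
      ∃ w', HasDerivAt (fun r => Real.exp (b * r) * g r) w' s ∧ w' ≤ 0 := by
    intro s hs
    obtain ⟨g', hg', hle⟩ := hg s hs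
    refine ⟨Real.exp (b * s) * (b * g s + g'), ?_, ?_⟩
    · exact (((hasDerivAt_id' s).const_mul b).exp.mul hg').congr_deriv (by ring)
    · exact mul_nonpos_of_nonneg_of_nonpos (Real.exp_pos _).le (by linarith)
  have hanti : AntitoneOn (fun r => Real.exp (b * r) * g r) (Set.Ici 0) := by
    refine antitoneOn_of_deriv_nonpos (convex_Ici 0) (fun s hs => ?_) (fun s hs => ?_)
      (fun s hs => ?_)
    · obtain ⟨w', hw', -⟩ := hweighted s hs
      exact hw'.continuousAt.continuousWithinAt
    all_goals rw [interior_Ici] at hs; obtain ⟨w', hw', hle⟩ := hweighted s hs.le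
    · exact hw'.differentiableAt.differentiableWithinAt
    · exact hw'.deriv ▸ hle
  have hle := hanti Set.self_mem_Ici ht ht
  simp only [mul_zero, Real.exp_zero, one_mul] at hle
  calc g t = Real.exp (-b * t) * (Real.exp (b * t) * g t) := by
        rw [← mul_assoc, ← Real.exp_add]; simp
    _ ≤ Real.exp (-b * t) * g 0 := by gcongr

noncomputable def conjMulCLM : ℂ →L[ℝ] ℂ →L[ℝ] ℂ :=
  (ContinuousLinearMap.mul ℝ ℂ).comp (conjCLE : ℂ →L[ℝ] ℂ)

@[simp]
theorem conjMulCLM_apply (z w : ℂ) : conjMulCLM z w = conj z * w := rfl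

namespace SchwartzMap

section toLp

variable {E F : Type*} [NormedAddCommGroup E] [NormedSpace ℝ E] [MeasurableSpace E] [BorelSpace E]
  [SecondCountableTopology E] [NormedAddCommGroup F] [NormedSpace ℝ F]

theorem norm_toLp_two (f : 𝓢(E, F)) (μ : Measure E) [μ.HasTemperateGrowth] :
    ‖f.toLp 2 μ‖ = (∫ x, ‖f x‖ ^ 2 ∂μ) ^ ((1 : ℝ) / 2) := by
  simpa [one_div] using norm_toLp' (f := f) (μ := μ) (p := 2) two_ne_zero ENNReal.ofNat_ne_top

theorem norm_toLp_two_sq (f : 𝓢(E, F)) (μ : Measure E) [μ.HasTemperateGrowth] :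
    ‖f.toLp 2 μ‖ ^ 2 = ∫ x, ‖f x‖ ^ 2 ∂μ := by
  rw [norm_toLp_two, ← Real.sqrt_eq_rpow, Real.sq_sqrt (integral_nonneg fun _ => by positivity)]

end toLp

theorem integrable_conj_deriv_deriv_mul (v : 𝓢(ℝ, ℂ)) :
    Integrable fun x => conj (deriv (deriv v) x) * v x :=
  (pairing conjMulCLM (derivCLM ℝ ℂ (derivCLM ℝ ℂ v)) v).integrable

theorem integral_conj_deriv_deriv_mul (v : 𝓢(ℝ, ℂ)) :
    ∫ x, conj (deriv (deriv v) x) * v x = -∫ x, conj (deriv v x) * deriv v x := by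
  have h := integral_bilinear_deriv_right_eq_neg_left (derivCLM ℝ ℂ v) v conjMulCLM
  simp only [conjMulCLM_apply, derivCLM_apply] at h
  rw [h, neg_neg]
  rfl

theorem im_integral_conj_deriv_deriv_mul (v : 𝓢(ℝ, ℂ)) :
    (∫ x, conj (deriv (deriv v) x) * v x).im = 0 := by
  simp_rw [integral_conj_deriv_deriv_mul, conj_mul', ← ofReal_pow, integral_complex_ofReal,
    neg_im, ofReal_im, neg_zero]

end SchwartzMap

noncomputable def dampedNLS (lam : ℝ) (α : ℝ → ℝ) (v : ℝ → ℂ) (x : ℝ) : ℂ :=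
  I * deriv (deriv v) x + I * (lam : ℂ) * ((‖v x‖ ^ 2 : ℝ) : ℂ) * v x - (α x : ℂ) * v x

theorem re_conj_dampedNLS_mul (lam : ℝ) (α : ℝ → ℝ) (v : ℝ → ℂ) (x : ℝ) :
    (conj (dampedNLS lam α v x) * v x).re =
      (conj (deriv (deriv v) x) * v x).im - α x * ‖v x‖ ^ 2 := by
  simp only [dampedNLS, Complex.sq_norm, normSq_apply, map_sub, map_add, map_mul, conj_I, neg_re,
    neg_im, conj_ofReal, mul_re, mul_im, sub_re, add_re, sub_im, add_im, I_re, I_im, conj_re,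
    conj_im, ofReal_re, ofReal_im]
  ring

theorem re_inner_le_of_ae_eq_dampedNLS {lam a : ℝ} {α : ℝ → ℝ} (hαa : ∀ x, a ≤ α x)
    (v : 𝓢(ℝ, ℂ)) {d : Lp ℂ 2 (volume : Measure ℝ)} (hd : d =ᵐ[volume] dampedNLS lam α v) :
    RCLike.re ⟪d, v.toLp 2⟫_ℂ ≤ -a * ‖v.toLp 2‖ ^ 2 := by
  have hae : (fun x => ⟪d x, (v.toLp 2 : ℝ → ℂ) x⟫_ℂ) =ᵐ[volume]
      fun x => conj (dampedNLS lam α v x) * v x := by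
    filter_upwards [hd, v.coeFn_toLp 2] with x hdx hvx
    rw [hdx, hvx, RCLike.inner_apply']
  have hint_nls : Integrable fun x => conj (dampedNLS lam α v x) * v x :=
    (L2.integrable_inner (𝕜 := ℂ) d (v.toLp 2 volume)).congr hae
  have hint_lap := v.integrable_conj_deriv_deriv_mul
  have hint_lap_im : Integrable fun x => (conj (deriv (deriv v) x) * v x).im := hint_lap.im
  have hint_sq : Integrable fun x => ‖v x‖ ^ 2 := by
    simpa using (v.memLp 2).integrable_norm_pow two_ne_zero
  calc RCLike.re ⟪d, v.toLp 2⟫_ℂ = ∫ x, (conj (dampedNLS lam α v x) * v x).re := by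
        rw [L2.inner_def, integral_congr_ae hae]; exact (integral_re hint_nls).symm
    _ ≤ ∫ x, ((conj (deriv (deriv v) x) * v x).im - a * ‖v x‖ ^ 2) := by
        refine integral_mono hint_nls.re (hint_lap_im.sub (hint_sq.const_mul a)) fun x => ?_
        rw [re_conj_dampedNLS_mul]
        gcongr
        exact hαa x
    _ = (∫ x, conj (deriv (deriv v) x) * v x).im - a * ∫ x, ‖v x‖ ^ 2 := by
        rw [integral_sub hint_lap_im (hint_sq.const_mul a), integral_const_mul]
        congr 1
        exact integral_im hint_lap
    _ = -a * ‖v.toLp 2‖ ^ 2 := by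
        rw [v.im_integral_conj_deriv_deriv_mul, SchwartzMap.norm_toLp_two_sq]; ring

theorem stmt18_general (lam a : ℝ) (α : ℝ → ℝ)
    (hαa : ∀ x : ℝ, a ≤ α x)
    (u : ℝ → SchwartzMap ℝ ℂ)
    (U : ℝ → Lp ℂ 2 (volume : Measure ℝ))
    (hU : ∀ t : ℝ, 0 ≤ t → (U t : ℝ → ℂ) =ᵐ[volume] u t)
    (hderiv : ∀ t : ℝ, 0 ≤ t → ∃ d : Lp ℂ 2 (volume : Measure ℝ),
      HasDerivAt U d t ∧
        (d : ℝ → ℂ) =ᵐ[volume] fun x : ℝ =>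
          Complex.I * deriv (deriv (u t)) x
            + Complex.I * (lam : ℂ) * ((‖u t x‖ ^ 2 : ℝ) : ℂ) * u t x
            - (α x : ℂ) * u t x) :
    ∀ t : ℝ, 0 ≤ t →
      (∫ x : ℝ, ‖u t x‖ ^ 2) ^ ((1 : ℝ) / 2) ≤
        Real.exp (-a * t) * (∫ x : ℝ, ‖u 0 x‖ ^ 2) ^ ((1 : ℝ) / 2) := by
  have hUu : ∀ s, 0 ≤ s → U s = (u s).toLp 2 := fun s hs =>
    Lp.ext ((hU s hs).trans ((u s).coeFn_toLp 2).symm)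
  have hdecay : ∀ s, 0 ≤ s →
      ∃ g', HasDerivAt (‖U ·‖ ^ 2) g' s ∧ g' ≤ -(2 * a) * ‖U s‖ ^ 2 := by
    intro s hs
    obtain ⟨d, hUd, hd⟩ := hderiv s hs
    refine ⟨_, hUd.norm_sq_rclike (𝕜 := ℂ), ?_⟩
    have hdiss := re_inner_le_of_ae_eq_dampedNLS hαa (u s) hd
    rw [hUu s hs]
    linarith
  intro t ht
  rw [← SchwartzMap.norm_toLp_two, ← SchwartzMap.norm_toLp_two, ← hUu t ht, ← hUu 0 le_rfl,
    ← pow_le_pow_iff_left₀ (norm_nonneg _) (by positivity) two_ne_zero]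
  calc ‖U t‖ ^ 2 ≤ Real.exp (-(2 * a) * t) * ‖U 0‖ ^ 2 := le_exp_mul_of_hasDerivAt_le hdecay ht
    _ = (Real.exp (-a * t) * ‖U 0‖) ^ 2 := by
      rw [mul_pow, ← Real.exp_nat_mul]
      congr 2
      push_cast
      ring

/-- Exponential decay of the charge for the damped deterministic NLS
equation `du/dt = i u'' + iλ|u|²u − αu` with damping `α ≥ a > 0`, where the equation holds
in the `L²` sense (via an `L²` representative `U` of the curve): for all `t ≥ 0`,
`‖u(t)‖_{L²} ≤ e^{−at}‖u(0)‖_{L²}`. -/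
theorem stmt18 (lam a : ℝ) (ha : 0 < a) (α : ℝ → ℝ)
    (hα : Function.HasTemperateGrowth α)
    (hαa : ∀ x : ℝ, a ≤ α x)
    (u : ℝ → SchwartzMap ℝ ℂ)
    (U : ℝ → Lp ℂ 2 (volume : Measure ℝ))
    (hU : ∀ t : ℝ, 0 ≤ t → (U t : ℝ → ℂ) =ᵐ[volume] u t)
    (hderiv : ∀ t : ℝ, 0 ≤ t → ∃ d : Lp ℂ 2 (volume : Measure ℝ),
      HasDerivAt U d t ∧
        (d : ℝ → ℂ) =ᵐ[volume] fun x : ℝ =>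
          Complex.I * deriv (deriv (u t)) x
            + Complex.I * (lam : ℂ) * ((‖u t x‖ ^ 2 : ℝ) : ℂ) * u t x
            - (α x : ℂ) * u t x) :
    ∀ t : ℝ, 0 ≤ t →
      (∫ x : ℝ, ‖u t x‖ ^ 2) ^ ((1 : ℝ) / 2) ≤
        Real.exp (-a * t) * (∫ x : ℝ, ‖u 0 x‖ ^ 2) ^ ((1 : ℝ) / 2) :=
  stmt18_general lam a α hαa u U hU hderiv
end
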